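/- arXiv:2406.11408 — 2 statements merged into one kernel-verified Lean document; each statement's English description precedes it below -/
import Mathlib

section
/- There exist constants c, C > 0 depending only on γ > 0 such that for every n ≥ 1 and every j ∈ {0,…,n}, with λ_j = 4 sin²(jπ/(2(n+1))) and λ_{j,-} = γ − √(γ² − λ_j) (complex square root), one has c (j/n)² ≤ Re λ_{j,-} ≤ |λ_{j,-}| ≤ C (j/n)². -/
open Real

lemma cpow_half_nonneg {x : ℝ} (hx : 0 ≤ x) : ((x:ℂ)) ^ ((1:ℂ)/2) = (Real.sqrt x : ℂ) := by
  have h : ((1:ℂ)/2) = ((1/2 : ℝ) : ℂ) := by push_cast; ring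
  rw [h, ← Complex.ofReal_cpow hx (1/2), Real.sqrt_eq_rpow]

lemma cpow_half_neg {x : ℝ} (hx : x < 0) :
    ((x:ℂ)) ^ ((1:ℂ)/2) = (Real.sqrt (-x) : ℂ) * Complex.I := by
  rw [Complex.ofReal_cpow_of_nonpos hx.le]
  have h1 : (-(x:ℂ)) = ((-x : ℝ) : ℂ) := by push_cast; ring
  rw [h1, cpow_half_nonneg (by linarith)]
  congr 1
  have h2 : (π:ℂ) * Complex.I * ((1:ℂ)/2) = (↑(π/2)) * Complex.I := by push_cast; ring
  rw [h2, Complex.exp_mul_I]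
  push_cast
  simp [Complex.cos_pi_div_two, Complex.sin_pi_div_two]

set_option maxHeartbeats 1000000 in
/-- Key lemma, first part: `c (j/n)² ≤ Re λ_{j,-} ≤ |λ_{j,-}| ≤ C (j/n)²` with
constants depending only on `γ`, where `λ_j = 4 sin²(jπ/(2(n+1)))` and
`λ_{j,-} = γ - √(γ² - λ_j)` (principal complex square root). -/
theorem stmt1 (γ : ℝ) (hγ : 0 < γ) :
    ∃ c C : ℝ, 0 < c ∧ 0 < C ∧
      ∀ n : ℕ, 1 ≤ n → ∀ j : ℕ, j ≤ n →
        let lam : ℝ := 4 * Real.sin ((j : ℝ) * π / (2 * (n + 1)))^2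
        let lm : ℂ := (γ : ℂ) - ((γ^2 - lam : ℝ) : ℂ) ^ ((1:ℂ)/2)
        c * ((j:ℝ)/n)^2 ≤ lm.re ∧ lm.re ≤ ‖lm‖ ∧
          ‖lm‖ ≤ C * ((j:ℝ)/n)^2 := by
  have hπ := Real.pi_pos
  refine ⟨min (1/(2*γ)) γ, max (π^2/γ) (2*π^2/γ^2), lt_min (by positivity) hγ,
    lt_max_of_lt_left (by positivity), ?_⟩
  intro n hn j hj lam lm
  have hn0 : (0:ℝ) < n := by exact_mod_cast hn
  have hjn : (j:ℝ) ≤ n := by exact_mod_cast hj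
  set θ : ℝ := (j:ℝ) * π / (2*(n+1)) with hθdef
  set q : ℝ := ((j:ℝ)/n)^2 with hqdef
  have hj0 : (0:ℝ) ≤ j := Nat.cast_nonneg j
  have hq : (0:ℝ) ≤ q := sq_nonneg _
  have hq1 : q ≤ 1 := by
    rw [hqdef]
    have : (j:ℝ)/n ≤ 1 := by rw [div_le_one hn0]; exact hjn
    nlinarith [div_nonneg hj0 hn0.le]
  have hθ0 : 0 ≤ θ := by positivity
  have hn1 : (1:ℝ) ≤ n := by exact_mod_cast hn
  have hθle : θ ≤ π/2 := by
    rw [hθdef, div_le_div_iff₀ (by positivity) (by norm_num)]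
    nlinarith
  have hlam_def : lam = 4 * Real.sin θ ^ 2 := rfl
  have hlm_def : lm = (γ:ℂ) - ((γ^2 - lam : ℝ):ℂ) ^ ((1:ℂ)/2) := rfl
  clear_value lam lm
  have hsin0 : 0 ≤ Real.sin θ := Real.sin_nonneg_of_nonneg_of_le_pi hθ0 (by linarith)
  have hlam0 : 0 ≤ lam := by rw [hlam_def]; positivity
  have hlam4 : lam ≤ 4 := by
    rw [hlam_def]; nlinarith [Real.sin_le_one θ, hsin0]
  have key_up : lam ≤ π^2 * q := by
    have h1 : θ ≤ (j:ℝ)*π/(2*n) := by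
      rw [hθdef]
      exact div_le_div_of_nonneg_left (by positivity) (by positivity) (by linarith)
    have h2 : Real.sin θ ≤ θ := Real.sin_le hθ0
    have heq : 4*((j:ℝ)*π/(2*n))^2 = π^2*((j:ℝ)/n)^2 := by field_simp; ring
    have h3 : Real.sin θ ^ 2 ≤ ((j:ℝ)*π/(2*n))^2 := by nlinarith [hsin0]
    rw [hlam_def, hqdef]
    linarith
  have key_low : q ≤ lam := by
    have h1 : 2/π * θ ≤ Real.sin θ := Real.mul_le_sin hθ0 hθle
    have he : 2/π * θ = (j:ℝ)/(n+1) := by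
      rw [hθdef]; field_simp
    have h2 : (j:ℝ)/(2*n) ≤ (j:ℝ)/(n+1) := by
      apply div_le_div_of_nonneg_left hj0 (by positivity)
      linarith
    have h3 : (j:ℝ)/(2*n) ≤ Real.sin θ := by rw [he] at h1; linarith
    have h4 : (0:ℝ) ≤ (j:ℝ)/(2*n) := by positivity
    have h5 : (j:ℝ)/(2*n) = ((j:ℝ)/n)/2 := by ring
    rw [hlam_def, hqdef]
    nlinarith
  by_cases hc : lam ≤ γ^2
  · -- real branch
    set s : ℝ := Real.sqrt (γ^2 - lam) with hsdef
    have hs0 : 0 ≤ s := Real.sqrt_nonneg _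
    have hs2 : s^2 = γ^2 - lam := Real.sq_sqrt (by linarith)
    have hsγ : s ≤ γ := by nlinarith
    have hlm : lm = ((γ - s : ℝ) : ℂ) := by
      rw [hlm_def, cpow_half_nonneg (by linarith : (0:ℝ) ≤ γ^2 - lam)]
      push_cast; ring
    rw [hlm]
    simp only [Complex.ofReal_re, Complex.norm_real, Real.norm_eq_abs,
      abs_of_nonneg (by linarith : (0:ℝ) ≤ γ - s)]
    refine ⟨?_, le_refl _, ?_⟩
    · have hγs : q ≤ 2*γ*(γ - s) := by nlinarith [sq_nonneg (γ - s)]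
      calc min (1/(2*γ)) γ * q ≤ (1/(2*γ)) * q :=
            mul_le_mul_of_nonneg_right (min_le_left _ _) hq
        _ = q / (2*γ) := by ring
        _ ≤ γ - s := by rw [div_le_iff₀ (by positivity)]; linarith
    · have h1 : γ*(γ - s) ≤ lam := by nlinarith [mul_le_mul_of_nonneg_right hsγ hs0]
      have h2 : γ - s ≤ (π^2/γ) * q := by
        rw [div_mul_eq_mul_div, le_div_iff₀ hγ]; nlinarith
      calc γ - s ≤ (π^2/γ) * q := h2
        _ ≤ max (π^2/γ) (2*π^2/γ^2) * q :=
            mul_le_mul_of_nonneg_right (le_max_left _ _) hq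
  · -- complex branch
    push_neg at hc
    set t : ℝ := Real.sqrt (lam - γ^2) with htdef
    have ht0 : 0 ≤ t := Real.sqrt_nonneg _
    have ht2 : t^2 = lam - γ^2 := Real.sq_sqrt (by linarith)
    have hlm : lm = (γ:ℂ) - (t:ℂ) * Complex.I := by
      rw [hlm_def, cpow_half_neg (by linarith : γ^2 - lam < 0), neg_sub]
    have hre : ((γ:ℂ) - (t:ℂ) * Complex.I).re = γ := by simp
    have habs : ‖(γ:ℂ) - (t:ℂ) * Complex.I‖ = Real.sqrt lam := by
      have hns : Complex.normSq ((γ:ℂ) - (t:ℂ) * Complex.I) = lam := by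
        simp [Complex.normSq_apply]; nlinarith
      rw [Complex.norm_def, hns]
    rw [hlm, hre, habs]
    have hγlam : γ ≤ Real.sqrt lam := by
      rw [show γ = Real.sqrt (γ^2) from (Real.sqrt_sq hγ.le).symm]
      exact Real.sqrt_le_sqrt (by linarith)
    have hs2' : Real.sqrt lam ≤ 2 := by
      have h4 : Real.sqrt lam ≤ Real.sqrt 4 := Real.sqrt_le_sqrt hlam4
      have : Real.sqrt 4 = 2 := by
        rw [show (4:ℝ) = 2^2 by norm_num, Real.sqrt_sq (by norm_num)]
      linarith
    have hq_lb : γ^2/π^2 ≤ q := by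
      rw [div_le_iff₀ (by positivity)]; nlinarith
    refine ⟨?_, hγlam, ?_⟩
    · calc min (1/(2*γ)) γ * q ≤ γ * q :=
          mul_le_mul_of_nonneg_right (min_le_right _ _) hq
        _ ≤ γ * 1 := mul_le_mul_of_nonneg_left hq1 hγ.le
        _ = γ := mul_one γ
    · have h1 : (2*π^2/γ^2) * (γ^2/π^2) = 2 := by field_simp
      calc Real.sqrt lam ≤ 2 := hs2'
        _ = (2*π^2/γ^2) * (γ^2/π^2) := h1.symm
        _ ≤ (2*π^2/γ^2) * q := mul_le_mul_of_nonneg_left hq_lb (by positivity)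
        _ ≤ max (π^2/γ) (2*π^2/γ^2) * q :=
            mul_le_mul_of_nonneg_right (le_max_right _ _) hq
end

section
/- For every q ≥ 0 and γ > 0 there exist constants C, c > 0 (depending only on q and γ) such that for all n ≥ 1, all t > 0, and all j ∈ {0,…,n}: |λ_{j,-}|^q · | e^{-λ_{j,-} t} (1 − e^{-Δλ_j t}) / Δλ_j | ≤ C (j/n)^{2q} e^{-c t j²/n²}, where Δλ_j = λ_{j,+} − λ_{j,-} = 2√(γ² − λ_j), and the quotient is interpreted as t e^{-λ_{j,-}t} when Δλ_j = 0. -/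
open Real

lemma abs_one_sub_exp_le (b : ℂ) (hb : 0 ≤ b.re) :
    ‖1 - Complex.exp (-b)‖ ≤ ‖b‖ := by
  have key := norm_image_sub_le_of_norm_deriv_le_segment'
    (f := fun u : ℝ => Complex.exp (-((u : ℂ) * b)))
    (f' := fun u : ℝ => Complex.exp (-((u : ℂ) * b)) * (-b))
    (a := 0) (b := 1) (C := ‖b‖)
    (fun x _ => by
      have h1 : HasDerivAt (fun u : ℝ => -((u : ℂ) * b)) (-b) x := by
        have h0 : HasDerivAt (fun u : ℝ => (u : ℂ) * b) b x := by
          simpa using ((Complex.ofRealCLM.hasDerivAt (x := x)).mul_const b)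
        exact h0.neg
      exact (h1.cexp).hasDerivWithinAt)
    (fun x hx => by
      rw [norm_mul, norm_neg]
      have h2 : ‖Complex.exp (-((x : ℂ) * b))‖ ≤ 1 := by
        rw [Complex.norm_exp, Real.exp_le_one_iff]
        simp only [Complex.neg_re, Complex.mul_re, Complex.ofReal_re, Complex.ofReal_im]
        nlinarith [hx.1]
      calc ‖Complex.exp (-((x:ℂ)*b))‖ * ‖b‖ ≤ 1 * ‖b‖ :=
            mul_le_mul_of_nonneg_right h2 (norm_nonneg _)
        _ = ‖b‖ := by rw [one_mul])
    1 (by norm_num)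
  simp only [Complex.ofReal_one, Complex.ofReal_zero, one_mul, zero_mul, neg_zero,
    Complex.exp_zero, sub_zero, mul_one] at key
  rw [norm_sub_rev]
  simpa using key

lemma ofReal_cpow_half {x : ℝ} (hx : 0 ≤ x) :
    ((x : ℝ) : ℂ) ^ ((1:ℂ)/2) = (Real.sqrt x : ℂ) := by
  have : ((1:ℂ)/2) = ((1/2 : ℝ) : ℂ) := by norm_num
  rw [this, ← Complex.ofReal_cpow hx, ← Real.sqrt_eq_rpow]

lemma ofReal_cpow_half_neg {x : ℝ} (hx : x < 0) :
    ((x : ℝ) : ℂ) ^ ((1:ℂ)/2) = Complex.I * (Real.sqrt (-x) : ℂ) := by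
  rw [Complex.ofReal_cpow_of_nonpos hx.le, ← Complex.ofReal_neg,
    ofReal_cpow_half (by linarith)]
  have : Complex.exp (↑π * Complex.I * ((1:ℂ)/2)) = Complex.I := by
    have : (↑π * Complex.I * ((1:ℂ)/2)) = (↑(π/2) * Complex.I) := by
      push_cast; ring
    rw [this, Complex.exp_mul_I]
    simp
  rw [this]; ring

set_option maxHeartbeats 1000000 in
/-- Key lemma, second part: for any `q ≥ 0` there are constants `C, c > 0` depending
only on `q` and `γ`, such that
`|λ_{j,-}|^q · |e^{-λ_{j,-}t}(1 - e^{-Δλ_j t})/Δλ_j| ≤ C (j/n)^{2q} e^{-c t j²/n²}`,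
where the quotient is interpreted as `t e^{-λ_{j,-}t}` when `Δλ_j = 0`. -/
theorem stmt2 (q γ : ℝ) (hq : 0 ≤ q) (hγ : 0 < γ) :
    ∃ C c : ℝ, 0 < C ∧ 0 < c ∧
      ∀ n : ℕ, 1 ≤ n → ∀ t : ℝ, 0 < t → ∀ j : ℕ, j ≤ n →
        let lam : ℝ := 4 * Real.sin ((j : ℝ) * π / (2 * (n + 1)))^2
        let s : ℂ := ((γ^2 - lam : ℝ) : ℂ) ^ ((1:ℂ)/2)
        let lm : ℂ := (γ : ℂ) - s
        let Δ : ℂ := 2 * s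
        (‖lm‖) ^ q * ‖
            (if Δ = 0 then (t : ℂ) * Complex.exp (-lm * t)
             else Complex.exp (-lm * t) * (1 - Complex.exp (-Δ * t)) / Δ)‖
          ≤ C * ((j:ℝ)/n) ^ (2*q) * Real.exp (-c * t * (j:ℝ)^2 / (n:ℝ)^2) := by
  have hπ := Real.pi_pos
  set M : ℝ := γ + Real.sqrt (γ^2+4) with hM
  have hM0 : 0 < M := by positivity
  set CA : ℝ := (π^2/γ)^q / γ with hCA
  set CB : ℝ := M^q * (8/γ) * (2*π^2/γ^2)^q with hCB
  have hCA0 : 0 < CA := by positivity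
  have hCB0 : 0 < CB := by positivity
  refine ⟨CA + CB, min (1/(2*γ)) (γ/8), by positivity,
    lt_min (by positivity) (by positivity), ?_⟩
  set c : ℝ := min (1/(2*γ)) (γ/8) with hcdef
  have hc0 : 0 < c := lt_min (by positivity) (by positivity)
  intro n hn t ht j hj lam s lm Δ
  have hlamdef' : lam = 4 * Real.sin ((j:ℝ)*π/(2*((n:ℝ)+1)))^2 := rfl
  have hsdef : s = ((γ^2 - lam : ℝ):ℂ)^((1:ℂ)/2) := rfl
  have hlmdef : lm = (γ:ℂ) - s := rfl
  have hΔdef : Δ = 2*s := rfl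
  clear_value lam s lm Δ
  have hn0 : (0:ℝ) < n := by exact_mod_cast hn
  have hj0 : (0:ℝ) ≤ j := Nat.cast_nonneg j
  set r : ℝ := (j:ℝ)^2/(n:ℝ)^2 with hrdef
  have hr0 : 0 ≤ r := by positivity
  have hr1 : r ≤ 1 := by
    rw [hrdef, div_le_one (by positivity)]
    have : (j:ℝ) ≤ n := by exact_mod_cast hj
    nlinarith
  set x : ℝ := (j : ℝ) * π / (2 * (n + 1)) with hxdef
  have hx0 : 0 ≤ x := by positivity
  have hx2 : x ≤ π/2 := by
    rw [hxdef, div_le_div_iff₀ (by positivity) (by norm_num)]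
    have : (j:ℝ) ≤ n := by exact_mod_cast hj
    nlinarith
  have hlam_def : lam = 4 * Real.sin x ^ 2 := by rw [hlamdef']
  have hlam0 : 0 ≤ lam := by rw [hlam_def]; positivity
  have hlam4 : lam ≤ 4 := by
    rw [hlam_def]
    nlinarith [Real.neg_one_le_sin x, Real.sin_le_one x]
  have hlam_ge : r ≤ lam := by
    have h1 : 2/π * x ≤ Real.sin x := Real.mul_le_sin hx0 hx2
    have h2 : 0 ≤ 2/π * x := by positivity
    have h3 : (2/π * x)^2 ≤ Real.sin x ^ 2 := by nlinarith
    have hxval : 2/π * x = (j:ℝ)/(n+1) := by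
      rw [hxdef]; field_simp
    rw [hxval] at h3
    rw [div_pow] at h3
    have hn1 : (n:ℝ) + 1 ≤ 2 * n := by
      have : (1:ℝ) ≤ n := by exact_mod_cast hn
      linarith
    have hjn : (j:ℝ)^2/(n:ℝ)^2 ≤ 4 * ((j:ℝ)^2/((n:ℝ)+1)^2) := by
      rw [mul_div_assoc'] at *
      rw [div_le_div_iff₀ (by positivity) (by positivity)]
      have h4 : ((n:ℝ)+1)^2 ≤ 4*(n:ℝ)^2 := by nlinarith
      nlinarith [mul_le_mul_of_nonneg_left h4 (sq_nonneg (j:ℝ))]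
    rw [hlam_def, hrdef]
    nlinarith
  have hlam_le : lam ≤ π^2 * r := by
    have h1 : Real.sin x ≤ x := Real.sin_le hx0
    have h2 : 0 ≤ Real.sin x := Real.sin_nonneg_of_nonneg_of_le_pi hx0 (by linarith)
    have h3 : Real.sin x ^ 2 ≤ x^2 := by nlinarith
    have hx2' : x^2 ≤ π^2/4 * r := by
      rw [hxdef, hrdef]
      have heq : π^2/4*((j:ℝ)^2/(n:ℝ)^2) = (π^2*(j:ℝ)^2)/(4*(n:ℝ)^2) := by ring
      rw [heq, div_pow, div_le_div_iff₀ (by positivity) (by positivity)]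
      have h6 : (n:ℝ)^2 ≤ ((n:ℝ)+1)^2 := by nlinarith
      nlinarith [mul_le_mul_of_nonneg_left h6 (by positivity : (0:ℝ) ≤ π^2*(j:ℝ)^2)]
    rw [hlam_def]; nlinarith
  -- rewrite RHS
  have hRHS : (CA + CB) * ((j:ℝ)/n) ^ (2*q) * Real.exp (-c * t * (j:ℝ)^2 / (n:ℝ)^2)
      = (CA + CB) * r ^ q * Real.exp (-(c * t * r)) := by
    congr 1
    · congr 1
      rw [Real.rpow_mul (by positivity), hrdef]
      congr 1
      rw [show ((2:ℝ)) = ((2:ℕ):ℝ) by norm_num, Real.rpow_natCast, div_pow]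
    · congr 1
      rw [hrdef]; ring
  rw [hRHS]
  have hcle1 : c ≤ 1/(2*γ) := min_le_left _ _
  have hcle2 : c ≤ γ/8 := min_le_right _ _
  have habsnn : 0 ≤ ‖lm‖ := norm_nonneg _
  by_cases hA : lam ≤ γ^2/2
  · -- Case A : lam small, everything real
    set σ : ℝ := Real.sqrt (γ^2 - lam) with hσdef
    have hgl2 : 0 ≤ γ^2 - lam := by linarith [sq_nonneg γ]
    have hσ2 : σ^2 = γ^2 - lam := Real.sq_sqrt hgl2
    have hσ0 : 0 ≤ σ := Real.sqrt_nonneg _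
    have hσge : γ/2 ≤ σ := by
      have h1 : (γ/2)^2 ≤ γ^2 - lam := by linarith
      calc γ/2 = Real.sqrt ((γ/2)^2) := (Real.sqrt_sq (by positivity)).symm
        _ ≤ σ := Real.sqrt_le_sqrt h1
    have hσle : σ ≤ γ := by
      have h1 : γ^2 - lam ≤ γ^2 := by linarith
      calc σ ≤ Real.sqrt (γ^2) := Real.sqrt_le_sqrt h1
        _ = γ := Real.sqrt_sq hγ.le
    have hs : s = ((σ:ℝ):ℂ) := by rw [hsdef]; exact ofReal_cpow_half hgl2
    have hΔeq : Δ = ((2*σ : ℝ):ℂ) := by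
      rw [hΔdef, hs]; push_cast; ring
    have h2σ : (0:ℝ) < 2*σ := by linarith
    have hΔne : Δ ≠ 0 := by
      rw [hΔeq]
      intro hcon
      rw [Complex.ofReal_eq_zero] at hcon
      linarith
    have hlmeq : lm = ((γ - σ : ℝ):ℂ) := by
      rw [hlmdef, hs]; push_cast; ring
    split_ifs with hifs
    · exact absurd hifs hΔne
    have habslm : ‖lm‖ = γ - σ := by
      rw [hlmeq, Complex.norm_real, Real.norm_eq_abs, abs_of_nonneg (by linarith)]
    have he1 : ‖Complex.exp (-lm * t)‖ = Real.exp (-(γ-σ)*t) := by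
      have h : (-lm*(t:ℂ)) = ((-(γ-σ)*t : ℝ) : ℂ) := by rw [hlmeq]; push_cast; ring
      rw [h, Complex.norm_exp, Complex.ofReal_re]
    have he2 : ‖1 - Complex.exp (-Δ * t)‖ = |1 - Real.exp (-(2*σ)*t)| := by
      have h : (-Δ*(t:ℂ)) = ((-(2*σ)*t:ℝ):ℂ) := by rw [hΔeq]; push_cast; ring
      rw [h, ← Complex.ofReal_exp, ← Complex.ofReal_one, ← Complex.ofReal_sub,
        Complex.norm_real, Real.norm_eq_abs]
    have he3 : ‖Δ‖ = 2*σ := by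
      rw [hΔeq, Complex.norm_real, Real.norm_eq_abs, abs_of_nonneg (by positivity)]
    rw [norm_div, norm_mul, habslm, he1, he2, he3]
    have hb1 : |1 - Real.exp (-(2*σ)*t)| ≤ 1 := by
      have h1 : Real.exp (-(2*σ)*t) ≤ 1 := Real.exp_le_one_iff.mpr
        (by linarith [mul_nonneg (by linarith : (0:ℝ) ≤ 2*σ) ht.le])
      have h2 : 0 < Real.exp (-(2*σ)*t) := Real.exp_pos _
      rw [abs_le]; constructor <;> linarith
    have hμlam1 : γ - σ ≤ lam/γ := by
      rw [le_div_iff₀ hγ]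
      linarith [mul_nonneg hσ0 (by linarith : (0:ℝ) ≤ γ - σ), hσ2]
    have hμlam2 : lam/(2*γ) ≤ γ - σ := by
      rw [div_le_iff₀ (by positivity)]
      linarith [sq_nonneg (γ-σ), hσ2]
    have hb2 : (γ-σ)^q ≤ (π^2/γ)^q * r^q := by
      have h : γ - σ ≤ π^2/γ*r := by
        rw [div_mul_eq_mul_div, le_div_iff₀ hγ]
        linarith [mul_nonneg hσ0 (by linarith : (0:ℝ) ≤ γ - σ), hσ2, hlam_le]
      calc (γ-σ)^q ≤ (π^2/γ*r)^q := Real.rpow_le_rpow (by linarith) h hq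
        _ = (π^2/γ)^q * r^q := Real.mul_rpow (by positivity) hr0
    have hb3 : Real.exp (-(γ-σ)*t) ≤ Real.exp (-(c*t*r)) := by
      apply Real.exp_le_exp.mpr
      have h1 : c*r ≤ γ - σ := by
        have h2 : c*r ≤ 1/(2*γ)*r := mul_le_mul_of_nonneg_right hcle1 hr0
        have h3 : (1:ℝ)/(2*γ)*r ≤ lam/(2*γ) := by
          rw [one_div_mul_eq_div]
          gcongr
        linarith
      linarith [mul_le_mul_of_nonneg_right h1 ht.le]
    have hexp0 : (0:ℝ) < Real.exp (-(c*t*r)) := Real.exp_pos _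
    have hrq : 0 ≤ r^q := Real.rpow_nonneg hr0 q
    calc (γ-σ)^q * (Real.exp (-(γ-σ)*t) * |1 - Real.exp (-(2*σ)*t)| / (2*σ))
        ≤ ((π^2/γ)^q * r^q) * (Real.exp (-(c*t*r)) * 1 / γ) := by
          apply mul_le_mul hb2 ?_ (by positivity) (by positivity)
          gcongr <;> first
            | exact hb1
            | exact hb3
            | exact Real.exp_le_exp.mp hb3
            | linarith
      _ = CA * r^q * Real.exp (-(c*t*r)) := by rw [hCA]; ring
      _ ≤ (CA+CB)*r^q*Real.exp (-(c*t*r)) := by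
          linarith [mul_nonneg (mul_nonneg hCB0.le hrq) hexp0.le]
  · -- Case B : lam large
    push_neg at hA
    have hrB : γ^2/(2*π^2) ≤ r := by
      rw [div_le_iff₀ (by positivity)]
      linarith [hlam_le]
    obtain ⟨hlmre, hΔre, habsM⟩ :
        γ/4 ≤ lm.re ∧ 0 ≤ Δ.re ∧ ‖lm‖ ≤ M := by
      by_cases hsign : 0 ≤ γ^2 - lam
      · set σ : ℝ := Real.sqrt (γ^2 - lam) with hσdef
        have hσ2 : σ^2 = γ^2 - lam := Real.sq_sqrt hsign
        have hσ0 : 0 ≤ σ := Real.sqrt_nonneg _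
        have hσle : σ ≤ 3*γ/4 := by
          have h1 : γ^2 - lam ≤ (3*γ/4)^2 := by linarith
          calc σ ≤ Real.sqrt ((3*γ/4)^2) := Real.sqrt_le_sqrt h1
            _ = 3*γ/4 := Real.sqrt_sq (by positivity)
        have hs : s = ((σ:ℝ):ℂ) := by rw [hsdef]; exact ofReal_cpow_half hsign
        refine ⟨?_, ?_, ?_⟩
        · rw [hlmdef, hs]; simp only [Complex.sub_re, Complex.ofReal_re]; linarith
        · rw [hΔdef, hs]
          simp only [Complex.mul_re, Complex.ofReal_re, Complex.ofReal_im]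
          norm_num; linarith
        · have : lm = ((γ - σ : ℝ):ℂ) := by rw [hlmdef, hs]; push_cast; ring
          rw [this, Complex.norm_real, Real.norm_eq_abs, abs_of_nonneg (by linarith)]
          rw [hM]
          linarith [Real.sqrt_nonneg (γ^2+4)]
      · have hlt : γ^2 - lam < 0 := lt_of_not_ge hsign
        set w : ℝ := Real.sqrt (lam - γ^2) with hwdef
        have hw0 : 0 ≤ w := Real.sqrt_nonneg _
        have hs : s = Complex.I * ((w:ℝ):ℂ) := by
          rw [hsdef, ofReal_cpow_half_neg hlt, hwdef, neg_sub]
        refine ⟨?_, ?_, ?_⟩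
        · rw [hlmdef, hs]
          simp only [Complex.sub_re, Complex.ofReal_re, Complex.mul_re, Complex.I_re,
            Complex.I_im, Complex.ofReal_im]
          ring_nf
          linarith
        · rw [hΔdef, hs]
          simp only [Complex.mul_re, Complex.I_re, Complex.I_im, Complex.ofReal_re,
            Complex.ofReal_im]
          norm_num
        · have hwle : w ≤ Real.sqrt (γ^2+4) := by
            rw [hwdef]
            exact Real.sqrt_le_sqrt (by linarith [sq_nonneg γ])
          calc ‖lm‖ ≤ ‖((γ:ℂ))‖ + ‖s‖ := by
                rw [hlmdef]
                exact norm_sub_le _ _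
            _ = γ + w := by
                rw [hs, norm_mul, Complex.norm_I, Complex.norm_real,
                  Complex.norm_real, Real.norm_eq_abs, Real.norm_eq_abs, one_mul, abs_of_pos hγ, abs_of_nonneg hw0]
            _ ≤ M := by rw [hM]; linarith
    have hMq0 : (0:ℝ) ≤ M^q := Real.rpow_nonneg hM0.le q
    have hkey : ‖
        (if Δ = 0 then (t : ℂ) * Complex.exp (-lm * t)
         else Complex.exp (-lm * t) * (1 - Complex.exp (-Δ * t)) / Δ)‖
        ≤ t * Real.exp (-lm.re * t) := by
      have hre : ((-lm) * (t:ℂ)).re = -lm.re * t := by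
        simp [Complex.mul_re]
      split_ifs with h0
      · rw [norm_mul, Complex.norm_real, Real.norm_eq_abs, abs_of_pos ht, Complex.norm_exp, hre]
      · rw [norm_div, norm_mul, Complex.norm_exp, hre]
        have hb := abs_one_sub_exp_le (Δ * (t:ℂ))
          (by simp only [Complex.mul_re, Complex.ofReal_re, Complex.ofReal_im,
                mul_zero, sub_zero]
              exact mul_nonneg hΔre ht.le)
        have hΔabs : ‖Δ*(t:ℂ)‖ = ‖Δ‖ * t := by
          rw [norm_mul, Complex.norm_real, Real.norm_eq_abs, abs_of_pos ht]
        have hΔ0 : 0 < ‖Δ‖ := norm_pos_iff.mpr h0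
        have hstep : ‖1 - Complex.exp (-Δ * (t:ℂ))‖ ≤ ‖Δ‖ * t := by
          rw [show -Δ*(t:ℂ) = -(Δ*(t:ℂ)) by ring]
          exact hb.trans_eq hΔabs
        rw [div_le_iff₀ hΔ0]
        calc Real.exp (-lm.re * t) * ‖1 - Complex.exp (-Δ * ↑t)‖
            ≤ Real.exp (-lm.re * t) * (‖Δ‖ * t) :=
              mul_le_mul_of_nonneg_left hstep (Real.exp_pos _).le
          _ = t * Real.exp (-lm.re * t) * ‖Δ‖ := by ring
    have h2pq0 : (0:ℝ) ≤ (2*π^2/γ^2)^q := Real.rpow_nonneg (by positivity) q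
    have hexp0 : (0:ℝ) < Real.exp (-(c*t*r)) := Real.exp_pos _
    have hrq : 0 ≤ r^q := Real.rpow_nonneg hr0 q
    calc ‖lm‖ ^ q * ‖
            (if Δ = 0 then (t : ℂ) * Complex.exp (-lm * t)
             else Complex.exp (-lm * t) * (1 - Complex.exp (-Δ * t)) / Δ)‖
        ≤ M^q * (t * Real.exp (-lm.re * t)) := by
          apply mul_le_mul (Real.rpow_le_rpow habsnn habsM hq) hkey
            (norm_nonneg _) hMq0
      _ ≤ M^q * (t * Real.exp (-(γ/4) * t)) := by
          apply mul_le_mul_of_nonneg_left ?_ hMq0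
          apply mul_le_mul_of_nonneg_left ?_ ht.le
          apply Real.exp_le_exp.mpr
          linarith [mul_le_mul_of_nonneg_right hlmre ht.le]
      _ ≤ M^q * ((8/γ) * Real.exp (-(γ/8) * t)) := by
          apply mul_le_mul_of_nonneg_left ?_ hMq0
          have h1 : (γ/8)*t ≤ Real.exp ((γ/8)*t) := by
            linarith [Real.add_one_le_exp ((γ/8)*t)]
          have h2 : t ≤ (8/γ)*Real.exp ((γ/8)*t) :=
            calc t = (8/γ)*((γ/8)*t) := by field_simp
              _ ≤ (8/γ)*Real.exp ((γ/8)*t) :=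
                mul_le_mul_of_nonneg_left h1 (by positivity)
          calc t * Real.exp (-(γ/4)*t)
              ≤ ((8/γ)*Real.exp ((γ/8)*t)) * Real.exp (-(γ/4)*t) :=
                mul_le_mul_of_nonneg_right h2 (Real.exp_pos _).le
            _ = (8/γ) * Real.exp ((γ/8)*t + -(γ/4)*t) := by rw [Real.exp_add]; ring
            _ = (8/γ) * Real.exp (-(γ/8)*t) := by
                rw [show (γ/8)*t + -(γ/4)*t = -(γ/8)*t by ring]
      _ ≤ M^q * ((8/γ) * Real.exp (-(c*t*r))) := by
          apply mul_le_mul_of_nonneg_left ?_ hMq0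
          apply mul_le_mul_of_nonneg_left ?_ (by positivity : (0:ℝ) ≤ 8/γ)
          apply Real.exp_le_exp.mpr
          have h1 : c*(t*r) ≤ (γ/8)*(t*1) :=
            mul_le_mul hcle2 (mul_le_mul_of_nonneg_left hr1 ht.le)
              (by positivity) (by positivity)
          linarith
      _ ≤ M^q * ((8/γ) * Real.exp (-(c*t*r))) * ((2*π^2/γ^2)^q * r^q) := by
          have h2 : (1:ℝ) ≤ (2*π^2/γ^2)^q * r^q := by
            rw [← Real.mul_rpow (by positivity) hr0]
            have h3 : (1:ℝ) ≤ 2*π^2/γ^2 * r := by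
              rw [div_mul_eq_mul_div, le_div_iff₀ (by positivity)]
              rw [div_le_iff₀ (by positivity)] at hrB
              linarith
            calc (1:ℝ) = 1^q := (Real.one_rpow q).symm
              _ ≤ (2*π^2/γ^2*r)^q := Real.rpow_le_rpow (by norm_num) h3 hq
          nth_rewrite 1 [← mul_one (M^q * ((8/γ) * Real.exp (-(c*t*r))))]
          apply mul_le_mul_of_nonneg_left h2 (by positivity)
      _ = CB * r^q * Real.exp (-(c*t*r)) := by rw [hCB]; ring
      _ ≤ (CA+CB)*r^q*Real.exp (-(c*t*r)) := by
          linarith [mul_nonneg (mul_nonneg hCA0.le hrq) hexp0.le]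
end
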